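/- Let Δ, M̃_t, M_t, M̂_t, M_d, G be real matrices (with M_t and M_d invertible, G of size n×2n) and let f, h_d, h̃ ∈ ℝⁿ, z ∈ ℝ^{2n}, w ∈ ℝⁿ. Suppose ‖f‖ ≤ c_f, ‖h_d‖ ≤ c_d, ‖h̃‖ ≤ c_t, ‖w‖ ≤ ρ, and ‖1 - Δ M_t⁻¹ M̂_t‖ ≤ α with α < 1. Define η = Δ M̃_t M_d⁻¹ (f - h_d) - Δ M_t⁻¹ h̃ + (1 - Δ M_t⁻¹ M̂_t)(G z + w). If ρ ≥ (1/(1-α)) · ( ‖Δ M̃_t M_d⁻¹‖ (c_f + c_d) + ‖Δ M_t⁻¹‖ c_t + α ‖G‖ ‖z‖ ), then ‖η‖ ≤ ρ. -/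

import Mathlib

/-
The lumped uncertainty feeds back the robust input `w` only through `1 - Δ M_t⁻¹ M̂_t`, whose
gain is at most `α < 1`. Bounding every other term by operator norms gives
`‖η‖ ≤ K + α ρ` with `K = ‖Δ M̃_t M_d⁻¹‖ (c_f + c_d) + ‖Δ M_t⁻¹‖ c_t + α ‖G‖ ‖z‖`,
and `ρ ≥ K / (1 - α)` is exactly the condition `K + α ρ ≤ ρ`.
-/

open Matrix

/-- The operator norm of a real matrix induced by the Euclidean norm. -/
noncomputable def opNorm {m n : Type*} [Fintype m] [Fintype n] [DecidableEq n]
    (A : Matrix m n ℝ) : ℝ :=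
  ‖LinearMap.toContinuousLinearMap (Matrix.toEuclideanLin A)‖

lemma le_of_le_add_mul_of_one_div_sub_mul_le {x K α ρ : ℝ} (hα : α < 1)
    (hx : x ≤ K + α * ρ) (hρ : 1 / (1 - α) * K ≤ ρ) : x ≤ ρ := by
  rw [one_div_mul_eq_div, div_le_iff₀ (sub_pos.2 hα)] at hρ
  linarith

section opNorm

variable {m n : Type*} [Fintype m] [Fintype n] [DecidableEq n]

lemma opNorm_nonneg (A : Matrix m n ℝ) : 0 ≤ opNorm A :=
  norm_nonneg _

lemma opNorm_apply_le (A : Matrix m n ℝ) (x : EuclideanSpace ℝ n) :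
    ‖toEuclideanLin A x‖ ≤ opNorm A * ‖x‖ :=
  (LinearMap.toContinuousLinearMap (toEuclideanLin A)).le_opNorm x

lemma norm_toEuclideanLin_apply_le_of_le {A : Matrix m n ℝ} {x : EuclideanSpace ℝ n}
    {a c : ℝ} (hA : opNorm A ≤ a) (hx : ‖x‖ ≤ c) : ‖toEuclideanLin A x‖ ≤ a * c :=
  (opNorm_apply_le A x).trans <|
    mul_le_mul hA hx (norm_nonneg x) ((opNorm_nonneg A).trans hA)

end opNorm

theorem uncertainty_bound_general
    {n : ℕ}
    (Δ Mtil_t M_t Mhat_t M_d : Matrix (Fin n) (Fin n) ℝ)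
    (G : Matrix (Fin n) (Fin n ⊕ Fin n) ℝ)
    (f h_d htil : EuclideanSpace ℝ (Fin n))
    (z : EuclideanSpace ℝ (Fin n ⊕ Fin n))
    (w : EuclideanSpace ℝ (Fin n))
    (c_f c_d c_t ρ α : ℝ)
    (hf : ‖f‖ ≤ c_f) (hhd : ‖h_d‖ ≤ c_d) (hht : ‖htil‖ ≤ c_t)
    (hw : ‖w‖ ≤ ρ)
    (hα : opNorm (1 - Δ * M_t⁻¹ * Mhat_t) ≤ α) (hα1 : α < 1)
    (η : EuclideanSpace ℝ (Fin n))
    (hη : η = Matrix.toEuclideanLin (Δ * Mtil_t * M_d⁻¹) (f - h_d)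
      - Matrix.toEuclideanLin (Δ * M_t⁻¹) htil
      + Matrix.toEuclideanLin (1 - Δ * M_t⁻¹ * Mhat_t)
          (Matrix.toEuclideanLin G z + w))
    (hρ : ρ ≥ (1 / (1 - α)) * (opNorm (Δ * Mtil_t * M_d⁻¹) * (c_f + c_d)
      + opNorm (Δ * M_t⁻¹) * c_t + α * opNorm G * ‖z‖)) :
    ‖η‖ ≤ ρ := by
  have hfh : ‖f - h_d‖ ≤ c_f + c_d := (norm_sub_le f h_d).trans (add_le_add hf hhd)
  have hGzw : ‖toEuclideanLin G z + w‖ ≤ opNorm G * ‖z‖ + ρ :=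
    (norm_add_le _ _).trans (add_le_add (opNorm_apply_le G z) hw)
  refine le_of_le_add_mul_of_one_div_sub_mul_le hα1 ?_ hρ
  rw [hη]
  calc _ ≤ ‖toEuclideanLin (Δ * Mtil_t * M_d⁻¹) (f - h_d)‖
          + ‖toEuclideanLin (Δ * M_t⁻¹) htil‖
          + ‖toEuclideanLin (1 - Δ * M_t⁻¹ * Mhat_t) (toEuclideanLin G z + w)‖ :=
        (norm_add_le _ _).trans (add_le_add_left (norm_sub_le _ _) _)
    _ ≤ opNorm (Δ * Mtil_t * M_d⁻¹) * (c_f + c_d) + opNorm (Δ * M_t⁻¹) * c_t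
          + α * (opNorm G * ‖z‖ + ρ) := by
        gcongr
        · exact norm_toEuclideanLin_apply_le_of_le le_rfl hfh
        · exact norm_toEuclideanLin_apply_le_of_le le_rfl hht
        · exact norm_toEuclideanLin_apply_le_of_le hα hGzw
    _ = _ := by ring

/-- Choice of the robust-control gain `ρ` dominating the lumped uncertainty `η`
(Appendix C of the paper). -/
theorem uncertainty_bound
    {n : ℕ} (hn : 1 ≤ n)
    (Δ Mtil_t M_t Mhat_t M_d : Matrix (Fin n) (Fin n) ℝ)
    (hMt : IsUnit M_t) (hMd : IsUnit M_d)
    (G : Matrix (Fin n) (Fin n ⊕ Fin n) ℝ)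
    (f h_d htil : EuclideanSpace ℝ (Fin n))
    (z : EuclideanSpace ℝ (Fin n ⊕ Fin n))
    (w : EuclideanSpace ℝ (Fin n))
    (c_f c_d c_t ρ α : ℝ)
    (hf : ‖f‖ ≤ c_f) (hhd : ‖h_d‖ ≤ c_d) (hht : ‖htil‖ ≤ c_t)
    (hw : ‖w‖ ≤ ρ)
    (hα : opNorm (1 - Δ * M_t⁻¹ * Mhat_t) ≤ α) (hα1 : α < 1)
    (η : EuclideanSpace ℝ (Fin n))
    (hη : η = Matrix.toEuclideanLin (Δ * Mtil_t * M_d⁻¹) (f - h_d)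
      - Matrix.toEuclideanLin (Δ * M_t⁻¹) htil
      + Matrix.toEuclideanLin (1 - Δ * M_t⁻¹ * Mhat_t)
          (Matrix.toEuclideanLin G z + w))
    (hρ : ρ ≥ (1 / (1 - α)) * (opNorm (Δ * Mtil_t * M_d⁻¹) * (c_f + c_d)
      + opNorm (Δ * M_t⁻¹) * c_t + α * opNorm G * ‖z‖)) :
    ‖η‖ ≤ ρ :=
  uncertainty_bound_general Δ Mtil_t M_t Mhat_t M_d G f h_d htil z w c_f c_d c_t ρ α hf hhd hht hw
    hα hα1 η hη hρ
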